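/- arXiv:2107.04732 — 3 statements merged into one kernel-verified Lean document; each statement's English description precedes it below -/
import Mathlib

section
/- Let κ ≥ 4 and let ξ be a continuous real-valued function on the closure of Ω with |ξ(x)| ≤ 1 for every x in the closure of Ω, such that ξ is not identically 1 on Ω and not identically −1 on Ω. Then for every x in the closure of Ω, |κ ξ(x) + f(ξ(x)) − λ_ξ g(ξ(x))| ≤ κ. -/
open MeasureTheory

/-- Bound of the stabilized nonlinear term: for κ ≥ 4 and continuous ξ on the closure
of Ω with |ξ| ≤ 1 and ξ not identically ±1 on Ω, one has
|κ ξ(x) + f(ξ(x)) − λ_ξ g(ξ(x))| ≤ κ for all x in the closure of Ω, where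
f(x) = x − x³, g(x) = 1 − x², and λ_ξ = (∫_Ω f(ξ)) / (∫_Ω g(ξ)). -/
theorem stmt_2 (d : ℕ) (hd : 1 ≤ d) (Ω : Set (Fin d → ℝ))
    (hne : Ω.Nonempty) (hopen : IsOpen Ω) (hconn : IsConnected Ω)
    (hbdd : Bornology.IsBounded Ω) (hvol : volume Ω < ⊤)
    (κ : ℝ) (hκ : κ ≥ 4)
    (ξ : (Fin d → ℝ) → ℝ) (hcont : ContinuousOn ξ (closure Ω))
    (hbound : ∀ x ∈ closure Ω, |ξ x| ≤ 1)
    (hnot1 : ¬ ∀ x ∈ Ω, ξ x = 1) (hnotm1 : ¬ ∀ x ∈ Ω, ξ x = -1) :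
    ∀ x ∈ closure Ω,
      |κ * ξ x + (ξ x - ξ x ^ 3) -
        ((∫ y in Ω, (ξ y - ξ y ^ 3)) / ∫ y in Ω, (1 - ξ y ^ 2)) * (1 - ξ x ^ 2)| ≤ κ := by
  have hcompact : IsCompact (closure Ω) := hbdd.isCompact_closure
  have hcΩ : ContinuousOn ξ Ω := hcont.mono subset_closure
  have hcF : ContinuousOn (fun y => ξ y - ξ y ^ 3) (closure Ω) := hcont.sub (hcont.pow 3)
  have hcG : ContinuousOn (fun y => 1 - ξ y ^ 2) (closure Ω) :=
    continuousOn_const.sub (hcont.pow 2)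
  have hiF : IntegrableOn (fun y => ξ y - ξ y ^ 3) Ω volume :=
    (hcF.integrableOn_compact hcompact).mono_set subset_closure
  have hiG : IntegrableOn (fun y => 1 - ξ y ^ 2) Ω volume :=
    (hcG.integrableOn_compact hcompact).mono_set subset_closure
  -- some point of Ω where |ξ| < 1
  have hx0 : ∃ x0 ∈ Ω, |ξ x0| < 1 := by
    by_contra h
    push_neg at h
    have hpm : ∀ x ∈ Ω, ξ x = 1 ∨ ξ x = -1 := by
      intro x hxΩ
      have h1 := hbound x (subset_closure hxΩ)
      have h2 := h x hxΩ
      have : |ξ x| = 1 := le_antisymm h1 h2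
      rcases abs_eq (by norm_num : (0:ℝ) ≤ 1) |>.1 this with h' | h'
      · exact Or.inl h'
      · exact Or.inr h'
    have hU : IsOpen (Ω ∩ ξ ⁻¹' Set.Ioi 0) := hcΩ.isOpen_inter_preimage hopen isOpen_Ioi
    have hV : IsOpen (Ω ∩ ξ ⁻¹' Set.Iio 0) := hcΩ.isOpen_inter_preimage hopen isOpen_Iio
    have hcover : Ω ⊆ (Ω ∩ ξ ⁻¹' Set.Ioi 0) ∪ (Ω ∩ ξ ⁻¹' Set.Iio 0) := by
      intro x hxΩ
      rcases hpm x hxΩ with h' | h'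
      · exact Or.inl ⟨hxΩ, by simp [h']⟩
      · exact Or.inr ⟨hxΩ, by simp [h']⟩
    have hUne : (Ω ∩ (Ω ∩ ξ ⁻¹' Set.Ioi 0)).Nonempty := by
      push_neg at hnotm1
      obtain ⟨x, hxΩ, hx1⟩ := hnotm1
      rcases hpm x hxΩ with h' | h'
      · exact ⟨x, hxΩ, hxΩ, by simp [Set.mem_preimage, h']⟩
      · exact absurd h' hx1
    have hVne : (Ω ∩ (Ω ∩ ξ ⁻¹' Set.Iio 0)).Nonempty := by
      push_neg at hnot1
      obtain ⟨x, hxΩ, hx1⟩ := hnot1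
      rcases hpm x hxΩ with h' | h'
      · exact absurd h' hx1
      · exact ⟨x, hxΩ, hxΩ, by simp [Set.mem_preimage, h']⟩
    obtain ⟨x, -, ⟨-, hx1⟩, ⟨-, hx2⟩⟩ :=
      hconn.isPreconnected _ _ hU hV hcover hUne hVne
    exact absurd hx1 (by simpa using le_of_lt hx2)
  obtain ⟨x0, hx0Ω, hx0lt⟩ := hx0
  -- the denominator is positive
  have hGnonneg : ∀ y ∈ Ω, 0 ≤ 1 - ξ y ^ 2 := by
    intro y hy
    have h1 := hbound y (subset_closure hy)
    have := abs_le.1 h1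
    nlinarith [this.1, this.2]
  have hGae : 0 ≤ᵐ[volume.restrict Ω] fun y => 1 - ξ y ^ 2 :=
    (ae_restrict_iff' hopen.measurableSet).2 (ae_of_all _ hGnonneg)
  have hGpos : 0 < ∫ y in Ω, (1 - ξ y ^ 2) := by
    rw [setIntegral_pos_iff_support_of_nonneg_ae hGae hiG]
    have hW : IsOpen (Ω ∩ ξ ⁻¹' Set.Ioo (-1) 1) :=
      hcΩ.isOpen_inter_preimage hopen isOpen_Ioo
    have hWsub : (Ω ∩ ξ ⁻¹' Set.Ioo (-1) 1) ⊆
        (Function.support fun y => 1 - ξ y ^ 2) ∩ Ω := by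
      rintro y ⟨hyΩ, hy1, hy2⟩
      refine ⟨?_, hyΩ⟩
      simp only [Function.mem_support]
      nlinarith
    have hWne : (Ω ∩ ξ ⁻¹' Set.Ioo (-1) 1).Nonempty := by
      refine ⟨x0, hx0Ω, ?_⟩
      have := abs_lt.1 hx0lt
      exact ⟨this.1, this.2⟩
    exact lt_of_lt_of_le (hW.measure_pos volume hWne) (measure_mono hWsub)
  -- |λ| ≤ 1
  have hFle : |∫ y in Ω, (ξ y - ξ y ^ 3)| ≤ ∫ y in Ω, (1 - ξ y ^ 2) := by
    calc |∫ y in Ω, (ξ y - ξ y ^ 3)| ≤ ∫ y in Ω, |ξ y - ξ y ^ 3| := by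
          simpa [Real.norm_eq_abs] using
            norm_integral_le_integral_norm (μ := volume.restrict Ω) fun y => ξ y - ξ y ^ 3
      _ ≤ ∫ y in Ω, (1 - ξ y ^ 2) := by
          apply setIntegral_mono_on hiF.abs hiG hopen.measurableSet
          intro y hy
          have h1 := abs_le.1 (hbound y (subset_closure hy))
          rw [abs_le]
          constructor <;>
            nlinarith [h1.1, h1.2,
              mul_nonneg (by nlinarith [h1.1, h1.2] : (0:ℝ) ≤ 1 - ξ y ^ 2)
                (by linarith [h1.2] : (0:ℝ) ≤ 1 - ξ y),
              mul_nonneg (by nlinarith [h1.1, h1.2] : (0:ℝ) ≤ 1 - ξ y ^ 2)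
                (by linarith [h1.1] : (0:ℝ) ≤ 1 + ξ y)]
  set lam : ℝ := (∫ y in Ω, (ξ y - ξ y ^ 3)) / ∫ y in Ω, (1 - ξ y ^ 2) with hlam
  have hlam1 : |lam| ≤ 1 := by
    rw [hlam, abs_div, abs_of_pos hGpos]
    exact (div_le_one hGpos).2 hFle
  -- final pointwise bound
  intro x hx
  have ht := abs_le.1 (hbound x hx)
  have hl := abs_le.1 hlam1
  set t := ξ x
  rw [abs_le]
  constructor <;>
    nlinarith [ht.1, ht.2, hl.1, hl.2, mul_nonneg (mul_nonneg (by linarith [ht.1] : (0:ℝ) ≤ 1 + t) (by linarith [ht.2] : (0:ℝ) ≤ 1 - t)) (by linarith [hl.1] : (0:ℝ) ≤ 1 + lam),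
      mul_nonneg (mul_nonneg (by linarith [ht.1] : (0:ℝ) ≤ 1 + t) (by linarith [ht.2] : (0:ℝ) ≤ 1 - t)) (by linarith [hl.2] : (0:ℝ) ≤ 1 - lam),
      mul_nonneg (by linarith [ht.2] : (0:ℝ) ≤ 1 - t) (by linarith : (0:ℝ) ≤ κ - 4),
      mul_nonneg (by linarith [ht.1] : (0:ℝ) ≤ 1 + t) (by linarith : (0:ℝ) ≤ κ - 4),
      sq_nonneg (1 - t), sq_nonneg (1 + t)]
end

section
/- Assume κ ≥ 4, ε > 0 and τ > 0, and let u⁰ ∈ ℝ^m satisfy ‖u⁰‖ ≤ 1 and |Σ_{i=1}^m u⁰_i| < m. Define iterates by u^{n+1} = Φ_τ(uⁿ) for n ≥ 0. Then the discrete maximum bound principle holds unconditionally: ‖uⁿ‖ ≤ 1 for every n ≥ 0. -/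
/-!
Since `A` commutes with the identity, `exp(t L_κ) = e^{-κt} exp(t ε² A)`, so by (C) the stabilized
semigroup contracts by `e^{-κt}`. Hence `‖Φ_τ(v)‖ ≤ e^{-κτ} ‖v‖ + (1 - e^{-κτ}) ‖N_κ(v)‖ / κ`, and the
unit ball is invariant as soon as `‖N_κ(v)‖ ≤ κ` there. That holds because `|f| ≤ g` on `[-1, 1]`
forces `|λ(v)| ≤ 1`.
-/

open MeasureTheory

/-- The nonlinearity f(x) = x − x³. -/
noncomputable def fpt (x : ℝ) : ℝ := x - x ^ 3

/-- The function g(x) = 1 − x². -/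
noncomputable def gpt (x : ℝ) : ℝ := 1 - x ^ 2

/-- The Lagrange multiplier λ(v) = (Σᵢ f(vᵢ)) / (Σᵢ g(vᵢ)). -/
noncomputable def lam {m : ℕ} (v : Fin m → ℝ) : ℝ :=
  (∑ i, fpt (v i)) / (∑ i, gpt (v i))

/-- The stabilized nonlinear term N_κ(v)ᵢ = κ vᵢ + f(vᵢ) − λ(v) g(vᵢ). -/
noncomputable def Nk {m : ℕ} (κ : ℝ) (v : Fin m → ℝ) : Fin m → ℝ :=
  fun i => κ * v i + fpt (v i) - lam v * gpt (v i)

/-- The stabilized linear operator L_κ = ε²A − κ·Id. -/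
noncomputable def Lk {m : ℕ} (A : (Fin m → ℝ) →L[ℝ] (Fin m → ℝ)) (ε κ : ℝ) :
    (Fin m → ℝ) →L[ℝ] (Fin m → ℝ) :=
  ε ^ 2 • A - κ • ContinuousLinearMap.id ℝ (Fin m → ℝ)

/-- The ETD1 step Φ_τ(v) = exp(τL_κ)v + ∫₀^τ exp((τ−s)L_κ) N_κ(v) ds. -/
noncomputable def Phi {m : ℕ} (A : (Fin m → ℝ) →L[ℝ] (Fin m → ℝ)) (ε κ τ : ℝ)
    (v : Fin m → ℝ) : Fin m → ℝ :=
  (NormedSpace.exp (τ • Lk A ε κ)) v +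
    ∫ s in (0 : ℝ)..τ, (NormedSpace.exp ((τ - s) • Lk A ε κ)) (Nk κ v)

/-- The ETDRK2 step
Ψ_τ(v) = exp(τL_κ)v + ∫₀^τ exp((τ−s)L_κ)[(1−s/τ)N_κ(v) + (s/τ)N_κ(Φ_τ(v))] ds. -/
noncomputable def Psi {m : ℕ} (A : (Fin m → ℝ) →L[ℝ] (Fin m → ℝ)) (ε κ τ : ℝ)
    (v : Fin m → ℝ) : Fin m → ℝ :=
  (NormedSpace.exp (τ • Lk A ε κ)) v +
    ∫ s in (0 : ℝ)..τ, (NormedSpace.exp ((τ - s) • Lk A ε κ))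
      ((1 - s / τ) • Nk κ v + (s / τ) • Nk κ (Phi A ε κ τ v))

lemma fpt_eq_mul_gpt (x : ℝ) : fpt x = x * gpt x := by
  rw [fpt, gpt]; ring

lemma gpt_nonneg {x : ℝ} (hx : |x| ≤ 1) : 0 ≤ gpt x := by
  rw [gpt, sub_nonneg, ← sq_abs]
  exact pow_le_one₀ (abs_nonneg x) hx

lemma abs_fpt_le_gpt {x : ℝ} (hx : |x| ≤ 1) : |fpt x| ≤ gpt x := by
  rw [fpt_eq_mul_gpt, abs_mul, abs_of_nonneg (gpt_nonneg hx)]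
  exact mul_le_of_le_one_left (gpt_nonneg hx) hx

lemma abs_lam_le_one {m : ℕ} {v : Fin m → ℝ} (hv : ‖v‖ ≤ 1) : |lam v| ≤ 1 := by
  have hvi (i : Fin m) : |v i| ≤ 1 := (norm_le_pi_norm v i).trans hv
  have hf : |∑ i, fpt (v i)| ≤ ∑ i, gpt (v i) :=
    (Finset.abs_sum_le_sum_abs _ _).trans (Finset.sum_le_sum fun i _ => abs_fpt_le_gpt (hvi i))
  rw [lam, abs_div]
  exact div_le_one_of_le₀ (hf.trans (le_abs_self _)) (abs_nonneg _)

/-- The stabilization `κ ≥ 4` makes `x ↦ κ x + f(x) − l g(x)` increasing on `[-1, 1]`, where it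
maps `±1` to `±κ`. -/
lemma abs_stabilized_nonlinearity_le {κ x l : ℝ} (hκ : 4 ≤ κ) (hx : |x| ≤ 1) (hl : |l| ≤ 1) :
    |κ * x + fpt x - l * gpt x| ≤ κ := by
  rw [abs_le] at hx hl ⊢
  have hupper : κ - (κ * x + fpt x - l * gpt x) = (1 - x) * (κ - (x - l) * (1 + x)) := by
    rw [fpt, gpt]; ring
  have hlower : κ * x + fpt x - l * gpt x + κ = (1 + x) * (κ + (x - l) * (1 - x)) := by
    rw [fpt, gpt]; ring
  constructor
  · have : 0 ≤ (1 + x) * (κ + (x - l) * (1 - x)) := mul_nonneg (by linarith) (by nlinarith)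
    linarith
  · have : 0 ≤ (1 - x) * (κ - (x - l) * (1 + x)) := mul_nonneg (by linarith) (by nlinarith)
    linarith

lemma norm_Nk_le {m : ℕ} {κ : ℝ} {v : Fin m → ℝ} (hκ : 4 ≤ κ) (hv : ‖v‖ ≤ 1) :
    ‖Nk κ v‖ ≤ κ :=
  (pi_norm_le_iff_of_nonneg (by linarith)).2 fun i =>
    abs_stabilized_nonlinearity_le hκ ((norm_le_pi_norm v i).trans hv) (abs_lam_le_one hv)

lemma NormedSpace.exp_add_smul_one {𝔸 : Type*} [NormedRing 𝔸] [NormedAlgebra ℝ 𝔸]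
    [CompleteSpace 𝔸] (a : 𝔸) (c : ℝ) :
    NormedSpace.exp (a + c • 1) = Real.exp c • NormedSpace.exp a := by
  let +nondep : NormedAlgebra ℚ 𝔸 := .restrictScalars ℚ ℝ 𝔸
  rw [NormedSpace.exp_add_of_commute ((Commute.one_right a).smul_right c),
    ← Algebra.algebraMap_eq_smul_one, ← NormedSpace.algebraMap_exp_comm,
    Algebra.algebraMap_eq_smul_one, mul_smul_one, Real.exp_eq_exp_ℝ]

section Stabilized

variable {E : Type*} [NormedAddCommGroup E] [NormedSpace ℝ E] [CompleteSpace E]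
  {B : E →L[ℝ] E} {κ : ℝ}

lemma norm_exp_smul_sub_smul_id_apply_le
    (hB : ∀ t : ℝ, 0 ≤ t → ∀ v : E, ‖NormedSpace.exp (t • B) v‖ ≤ ‖v‖) {t : ℝ} (ht : 0 ≤ t)
    (v : E) :
    ‖NormedSpace.exp (t • (B - κ • ContinuousLinearMap.id ℝ E)) v‖
      ≤ Real.exp (-(κ * t)) * ‖v‖ := by
  have hsplit : t • (B - κ • ContinuousLinearMap.id ℝ E) = t • B + (-(κ * t)) • 1 := by
    rw [smul_sub, smul_smul, sub_eq_add_neg, ← neg_smul, ← ContinuousLinearMap.one_def, mul_comm]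
  rw [hsplit, NormedSpace.exp_add_smul_one, smul_apply, norm_smul,
    Real.norm_of_nonneg (Real.exp_pos _).le]
  exact mul_le_mul_of_nonneg_left (hB t ht v) (Real.exp_pos _).le

lemma norm_integral_exp_smul_sub_smul_id_apply_le
    (hB : ∀ t : ℝ, 0 ≤ t → ∀ v : E, ‖NormedSpace.exp (t • B) v‖ ≤ ‖v‖) (hκ : 0 < κ) {τ : ℝ}
    (hτ : 0 ≤ τ) (w : E) :
    ‖∫ s in (0 : ℝ)..τ, NormedSpace.exp ((τ - s) • (B - κ • ContinuousLinearMap.id ℝ E)) w‖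
      ≤ (1 - Real.exp (-(κ * τ))) / κ * ‖w‖ := by
  have hexp : (fun s => Real.exp (-(κ * (τ - s))) * ‖w‖)
      = fun s => Real.exp (κ * s - κ * τ) * ‖w‖ := by
    ext s; ring_nf
  calc _ ≤ ∫ s in (0 : ℝ)..τ, Real.exp (-(κ * (τ - s))) * ‖w‖ := by
        refine intervalIntegral.norm_integral_le_of_norm_le hτ
          (Filter.Eventually.of_forall fun s hs => ?_) ?_
        · exact norm_exp_smul_sub_smul_id_apply_le hB (sub_nonneg.2 hs.2) w
        · exact (by fun_prop : Continuous _).intervalIntegrable _ _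
    _ = (1 - Real.exp (-(κ * τ))) / κ * ‖w‖ := by
        rw [hexp, intervalIntegral.integral_mul_const,
          intervalIntegral.integral_comp_mul_sub (fun s => Real.exp s) hκ.ne', integral_exp]
        simp only [mul_zero, zero_sub, sub_self, Real.exp_zero, smul_eq_mul]
        ring

lemma norm_exp_add_integral_exp_le
    (hB : ∀ t : ℝ, 0 ≤ t → ∀ v : E, ‖NormedSpace.exp (t • B) v‖ ≤ ‖v‖) (hκ : 0 < κ) {τ M : ℝ}
    (hτ : 0 ≤ τ) {v w : E} (hv : ‖v‖ ≤ M) (hw : ‖w‖ ≤ κ * M) :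
    ‖NormedSpace.exp (τ • (B - κ • ContinuousLinearMap.id ℝ E)) v +
      ∫ s in (0 : ℝ)..τ, NormedSpace.exp ((τ - s) • (B - κ • ContinuousLinearMap.id ℝ E)) w‖
      ≤ M := by
  have hdecay : Real.exp (-(κ * τ)) ≤ 1 := Real.exp_le_one_iff.2 (by nlinarith)
  calc _ ≤ Real.exp (-(κ * τ)) * ‖v‖ + (1 - Real.exp (-(κ * τ))) / κ * ‖w‖ :=
        (norm_add_le _ _).trans (add_le_add (norm_exp_smul_sub_smul_id_apply_le hB hτ v)
          (norm_integral_exp_smul_sub_smul_id_apply_le hB hκ hτ w))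
    _ ≤ Real.exp (-(κ * τ)) * M + (1 - Real.exp (-(κ * τ))) / κ * (κ * M) := by gcongr
    _ = M := by field_simp; ring

end Stabilized

lemma norm_Phi_le_one {m : ℕ} {A : (Fin m → ℝ) →L[ℝ] (Fin m → ℝ)}
    (hC : ∀ t : ℝ, 0 ≤ t → ∀ v : Fin m → ℝ, ‖(NormedSpace.exp (t • A)) v‖ ≤ ‖v‖)
    (ε : ℝ) {κ τ : ℝ} (hκ : 4 ≤ κ) (hτ : 0 ≤ τ) {v : Fin m → ℝ} (hv : ‖v‖ ≤ 1) :
    ‖Phi A ε κ τ v‖ ≤ 1 := by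
  have hC' (t : ℝ) (ht : 0 ≤ t) (v : Fin m → ℝ) : ‖NormedSpace.exp (t • ε ^ 2 • A) v‖ ≤ ‖v‖ := by
    rw [smul_smul]; exact hC _ (by positivity) v
  exact norm_exp_add_integral_exp_le hC' (by linarith) hτ hv
    ((norm_Nk_le hκ hv).trans_eq (mul_one κ).symm)

theorem stmt_8_general (m : ℕ) (A : (Fin m → ℝ) →L[ℝ] (Fin m → ℝ))
    (hC : ∀ t : ℝ, 0 ≤ t → ∀ v : Fin m → ℝ, ‖(NormedSpace.exp (t • A)) v‖ ≤ ‖v‖)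
    (κ ε τ : ℝ) (hκ : κ ≥ 4) (hτ : τ > 0)
    (u : ℕ → Fin m → ℝ) (hnorm0 : ‖u 0‖ ≤ 1)
    (hstep : ∀ n : ℕ, u (n + 1) = Phi A ε κ τ (u n)) :
    ∀ n : ℕ, ‖u n‖ ≤ 1 := by
  intro n
  induction n with
  | zero => exact hnorm0
  | succ n ih => rw [hstep n]; exact norm_Phi_le_one hC ε hκ hτ.le ih

/-- Unconditional discrete maximum bound principle of the ETD1 scheme: ‖uⁿ‖_∞ ≤ 1 for
every n. -/
theorem stmt_8 (m : ℕ) (hm : 1 ≤ m) (A : (Fin m → ℝ) →L[ℝ] (Fin m → ℝ))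
    (hC : ∀ t : ℝ, 0 ≤ t → ∀ v : Fin m → ℝ, ‖(NormedSpace.exp (t • A)) v‖ ≤ ‖v‖)
    (hS : ∀ v : Fin m → ℝ, ∑ i, A v i = 0)
    (κ ε τ : ℝ) (hκ : κ ≥ 4) (hε : ε > 0) (hτ : τ > 0)
    (u : ℕ → Fin m → ℝ) (hnorm0 : ‖u 0‖ ≤ 1) (hmass0 : |∑ i, u 0 i| < (m : ℝ))
    (hstep : ∀ n : ℕ, u (n + 1) = Phi A ε κ τ (u n)) :
    ∀ n : ℕ, ‖u n‖ ≤ 1 :=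
  stmt_8_general m A hC κ ε τ hκ hτ u hnorm0 hstep
end

section
/- Let γ > 0 and let ξ₁, ξ₂ be continuous real-valued functions on the closure of Ω with |ξ_i(x)| ≤ 1 for all x in the closure of Ω and ∫_Ω g(ξ_i(x)) dx ≥ γ for i = 1, 2. Then for every x in the closure of Ω, |λ_{ξ₁} g(ξ₁(x)) − λ_{ξ₂} g(ξ₂(x))| ≤ C_γ · sup_{y∈closure(Ω)} |ξ₁(y) − ξ₂(y)|, where C_γ = 4|Ω|/γ + 2|Ω|²/γ². -/
/-!
Write `F(ξ) = ∫_Ω f(ξ)` and `G(ξ) = ∫_Ω g(ξ)`. On `[-1, 1]` both `f` and `g` are bounded by `1`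
and `2`-Lipschitz, so `|F(ξ)| ≤ |Ω|` and `F`, `G` and `g(ξ(x))` move by at most `2|Ω| M`,
`2|Ω| M` and `2 M` when `ξ₁` is replaced by `ξ₂`, where `M = sup |ξ₁ - ξ₂|`. Splitting
`F₁/G₁ a₁ - F₂/G₂ a₂ = F₁/G₁ (a₁ - a₂) + (F₁ - F₂)/G₁ a₂ + F₂ (G₂ - G₁)/(G₁ G₂) a₂`
and using `G₁, G₂ ≥ γ` gives the constant `4|Ω|/γ + 2|Ω|²/γ²`.
-/

open MeasureTheory

section UnitInterval

variable {a b : ℝ}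

theorem abs_one_sub_sq_le_one (ha : |a| ≤ 1) : |1 - a ^ 2| ≤ 1 := by
  rw [abs_le] at *
  constructor <;> nlinarith [ha.1, ha.2]

theorem abs_sub_cube_le_one (ha : |a| ≤ 1) : |a - a ^ 3| ≤ 1 := by
  rw [show a - a ^ 3 = a * (1 - a ^ 2) by ring, abs_mul]
  exact mul_le_one₀ ha (abs_nonneg _) (abs_one_sub_sq_le_one ha)

theorem abs_sub_cube_sub_sub_cube_le (ha : |a| ≤ 1) (hb : |b| ≤ 1) :
    |(a - a ^ 3) - (b - b ^ 3)| ≤ 2 * |a - b| := by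
  have hfactor : |1 - (a ^ 2 + a * b + b ^ 2)| ≤ 2 := by
    rw [abs_le] at *
    constructor <;> nlinarith [ha.1, ha.2, hb.1, hb.2]
  calc |(a - a ^ 3) - (b - b ^ 3)| = |1 - (a ^ 2 + a * b + b ^ 2)| * |a - b| := by
        rw [← abs_mul]; congr 1; ring
    _ ≤ 2 * |a - b| := by gcongr

theorem abs_one_sub_sq_sub_one_sub_sq_le (ha : |a| ≤ 1) (hb : |b| ≤ 1) :
    |(1 - a ^ 2) - (1 - b ^ 2)| ≤ 2 * |a - b| := by
  calc |(1 - a ^ 2) - (1 - b ^ 2)| = |a + b| * |a - b| := by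
        rw [← abs_mul, ← abs_neg]; congr 1; ring
    _ ≤ 2 * |a - b| := by
        gcongr
        exact (abs_add_le a b).trans (by linarith)

end UnitInterval

theorem abs_div_mul_sub_div_mul_le {F₁ F₂ G₁ G₂ a₁ a₂ V γ δa δF δG : ℝ} (hγ : 0 < γ)
    (hG₁ : γ ≤ G₁) (hG₂ : γ ≤ G₂) (hF₁ : |F₁| ≤ V) (hF₂ : |F₂| ≤ V) (ha₂ : |a₂| ≤ 1)
    (ha : |a₁ - a₂| ≤ δa) (hF : |F₁ - F₂| ≤ δF) (hG : |G₁ - G₂| ≤ δG) :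
    |F₁ / G₁ * a₁ - F₂ / G₂ * a₂| ≤ V / γ * δa + δF / γ + V * δG / γ ^ 2 := by
  have hG₁pos : 0 < G₁ := hγ.trans_le hG₁
  have hG₂pos : 0 < G₂ := hγ.trans_le hG₂
  have hsplit : F₁ / G₁ * a₁ - F₂ / G₂ * a₂ =
      F₁ / G₁ * (a₁ - a₂) + (F₁ - F₂) / G₁ * a₂ + F₂ * (G₂ - G₁) / (G₁ * G₂) * a₂ := by
    field_simp
    ring
  have hG₁G₂ : γ ^ 2 ≤ G₁ * G₂ := by rw [sq]; exact mul_le_mul hG₁ hG₂ hγ.le hG₁pos.le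
  have hV : 0 ≤ V := (abs_nonneg _).trans hF₁
  have hδa : 0 ≤ δa := (abs_nonneg _).trans ha
  have hδF : 0 ≤ δF := (abs_nonneg _).trans hF
  have hδG : 0 ≤ δG := (abs_nonneg _).trans hG
  have hG' : |G₂ - G₁| ≤ δG := by rwa [abs_sub_comm]
  have t₁ : |F₁ / G₁ * (a₁ - a₂)| ≤ V / γ * δa := by
    rw [abs_mul, abs_div, abs_of_pos hG₁pos]
    gcongr
  have t₂ : |(F₁ - F₂) / G₁ * a₂| ≤ δF / γ * 1 := by
    rw [abs_mul, abs_div, abs_of_pos hG₁pos]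
    gcongr
  have t₃ : |F₂ * (G₂ - G₁) / (G₁ * G₂) * a₂| ≤ V * δG / γ ^ 2 * 1 := by
    rw [abs_mul, abs_div, abs_mul, abs_of_pos (mul_pos hG₁pos hG₂pos)]
    gcongr
  rw [hsplit]
  linarith [abs_add_three (F₁ / G₁ * (a₁ - a₂)) ((F₁ - F₂) / G₁ * a₂)
    (F₂ * (G₂ - G₁) / (G₁ * G₂) * a₂)]

theorem le_biSup_of_forall_le {β : Type*} {s : Set β} {f : β → ℝ} {B : ℝ}
    (hf : ∀ y ∈ s, f y ≤ B) {y : β} (hy : y ∈ s) : f y ≤ ⨆ z ∈ s, f z := by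
  refine le_ciSup₂ (f := fun z (_ : z ∈ s) => f z) ⟨B, ?_⟩ y hy
  rintro _ ⟨-, ⟨z, rfl⟩, ⟨hz, rfl⟩⟩
  exact hf z hz

section SetIntegral

variable {α : Type*} [MeasurableSpace α] {μ : Measure α} {s : Set α}

theorem integrableOn_comp_of_abs_le_one (hs : μ s < ⊤) {u : α → ℝ}
    (hu : AEStronglyMeasurable u (μ.restrict s)) (hu₁ : ∀ᵐ y ∂μ.restrict s, |u y| ≤ 1)
    {φ : ℝ → ℝ} (hφ : Continuous φ) (hφ₁ : ∀ a, |a| ≤ 1 → |φ a| ≤ 1) :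
    IntegrableOn (fun y => φ (u y)) s μ :=
  .of_bound hs (hφ.comp_aestronglyMeasurable hu) 1 (hu₁.mono fun _ hy => hφ₁ _ hy)

theorem abs_setIntegral_sub_setIntegral_le (hs : μ s < ⊤) {u v : α → ℝ} {C : ℝ}
    (hu : IntegrableOn u s μ) (hv : IntegrableOn v s μ)
    (huv : ∀ᵐ y ∂μ.restrict s, |u y - v y| ≤ C) :
    |∫ y in s, u y ∂μ - ∫ y in s, v y ∂μ| ≤ C * μ.real s := by
  rw [← integral_sub hu hv]
  exact norm_setIntegral_le_of_norm_le_const_ae (f := fun y => u y - v y) hs huv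

theorem abs_multiplier_mul_sub_multiplier_mul_le (hs : μ s < ⊤) {u v : α → ℝ} {γ M a b : ℝ}
    (hγ : 0 < γ) (hu : AEStronglyMeasurable u (μ.restrict s))
    (hv : AEStronglyMeasurable v (μ.restrict s))
    (hu₁ : ∀ᵐ y ∂μ.restrict s, |u y| ≤ 1) (hv₁ : ∀ᵐ y ∂μ.restrict s, |v y| ≤ 1)
    (huv : ∀ᵐ y ∂μ.restrict s, |u y - v y| ≤ M)
    (hγu : γ ≤ ∫ y in s, (1 - u y ^ 2) ∂μ) (hγv : γ ≤ ∫ y in s, (1 - v y ^ 2) ∂μ)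
    (ha : |a| ≤ 1) (hb : |b| ≤ 1) (hab : |a - b| ≤ M) :
    |(∫ y in s, (u y - u y ^ 3) ∂μ) / (∫ y in s, (1 - u y ^ 2) ∂μ) * (1 - a ^ 2) -
        (∫ y in s, (v y - v y ^ 3) ∂μ) / (∫ y in s, (1 - v y ^ 2) ∂μ) * (1 - b ^ 2)| ≤
      (4 * μ.real s / γ + 2 * μ.real s ^ 2 / γ ^ 2) * M := by
  have hf : Continuous fun a : ℝ => a - a ^ 3 := by fun_prop
  have hg : Continuous fun a : ℝ => 1 - a ^ 2 := by fun_prop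
  have hf_bound (w : α → ℝ) (hw₁ : ∀ᵐ y ∂μ.restrict s, |w y| ≤ 1) :
      |∫ y in s, (w y - w y ^ 3) ∂μ| ≤ μ.real s := by
    simpa using norm_setIntegral_le_of_norm_le_const_ae (f := fun y => w y - w y ^ 3) (C := 1)
      hs (hw₁.mono fun _ hy => abs_sub_cube_le_one hy)
  have hF := abs_setIntegral_sub_setIntegral_le hs
    (integrableOn_comp_of_abs_le_one hs hu hu₁ hf fun _ => abs_sub_cube_le_one)
    (integrableOn_comp_of_abs_le_one hs hv hv₁ hf fun _ => abs_sub_cube_le_one)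
    (C := 2 * M) (by
      filter_upwards [hu₁, hv₁, huv] with y hy₁ hy₂ hy
      linarith [abs_sub_cube_sub_sub_cube_le hy₁ hy₂])
  have hG := abs_setIntegral_sub_setIntegral_le hs
    (integrableOn_comp_of_abs_le_one hs hu hu₁ hg fun _ => abs_one_sub_sq_le_one)
    (integrableOn_comp_of_abs_le_one hs hv hv₁ hg fun _ => abs_one_sub_sq_le_one)
    (C := 2 * M) (by
      filter_upwards [hu₁, hv₁, huv] with y hy₁ hy₂ hy
      linarith [abs_one_sub_sq_sub_one_sub_sq_le hy₁ hy₂])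
  calc _ ≤ μ.real s / γ * (2 * M) + 2 * M * μ.real s / γ +
        μ.real s * (2 * M * μ.real s) / γ ^ 2 :=
        abs_div_mul_sub_div_mul_le hγ hγu hγv (hf_bound u hu₁) (hf_bound v hv₁)
          (abs_one_sub_sq_le_one hb)
          (by linarith [abs_one_sub_sq_sub_one_sub_sq_le ha hb]) hF hG
    _ = (4 * μ.real s / γ + 2 * μ.real s ^ 2 / γ ^ 2) * M := by ring

end SetIntegral

theorem stmt_12_general (d : ℕ) (Ω : Set (Fin d → ℝ)) (hopen : IsOpen Ω) (hvol : volume Ω < ⊤)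
    (γ : ℝ) (hγ : γ > 0)
    (ξ₁ ξ₂ : (Fin d → ℝ) → ℝ)
    (hcont₁ : ContinuousOn ξ₁ (closure Ω)) (hcont₂ : ContinuousOn ξ₂ (closure Ω))
    (hbound₁ : ∀ x ∈ closure Ω, |ξ₁ x| ≤ 1) (hbound₂ : ∀ x ∈ closure Ω, |ξ₂ x| ≤ 1)
    (hγ₁ : γ ≤ ∫ x in Ω, (1 - ξ₁ x ^ 2)) (hγ₂ : γ ≤ ∫ x in Ω, (1 - ξ₂ x ^ 2)) :
    ∀ x ∈ closure Ω,
      |((∫ y in Ω, (ξ₁ y - ξ₁ y ^ 3)) / ∫ y in Ω, (1 - ξ₁ y ^ 2)) * (1 - ξ₁ x ^ 2) -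
        ((∫ y in Ω, (ξ₂ y - ξ₂ y ^ 3)) / ∫ y in Ω, (1 - ξ₂ y ^ 2)) * (1 - ξ₂ x ^ 2)| ≤
        (4 * (volume Ω).toReal / γ + 2 * (volume Ω).toReal ^ 2 / γ ^ 2) *
          ⨆ y ∈ closure Ω, |ξ₁ y - ξ₂ y| := by
  intro x hx
  have hΩ : MeasurableSet Ω := hopen.measurableSet
  have hM : ∀ y ∈ closure Ω, |ξ₁ y - ξ₂ y| ≤ ⨆ z ∈ closure Ω, |ξ₁ z - ξ₂ z| :=
    fun y => le_biSup_of_forall_le fun z hz =>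
      (abs_sub _ _).trans (add_le_add (hbound₁ z hz) (hbound₂ z hz))
  have on_Ω {p : (Fin d → ℝ) → Prop} (hp : ∀ y ∈ closure Ω, p y) : ∀ᵐ y ∂volume.restrict Ω, p y :=
    ae_restrict_of_forall_mem hΩ fun y hy => hp y (subset_closure hy)
  exact abs_multiplier_mul_sub_multiplier_mul_le hvol hγ
    ((hcont₁.mono subset_closure).aestronglyMeasurable hΩ)
    ((hcont₂.mono subset_closure).aestronglyMeasurable hΩ)
    (on_Ω hbound₁) (on_Ω hbound₂) (on_Ω hM) hγ₁ hγ₂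
    (hbound₁ x hx) (hbound₂ x hx) (hM x hx)

/-- Lipschitz-type bound for the map ξ ↦ λ_ξ g(ξ): if |ξᵢ| ≤ 1 on the closure of Ω and
∫_Ω g(ξᵢ) ≥ γ > 0 for i = 1,2, then for every x in the closure of Ω,
|λ_{ξ₁} g(ξ₁(x)) − λ_{ξ₂} g(ξ₂(x))| ≤ C_γ · sup_{closure Ω} |ξ₁ − ξ₂| with
C_γ = 4|Ω|/γ + 2|Ω|²/γ², where f(x) = x − x³, g(x) = 1 − x² and
λ_ξ = (∫_Ω f(ξ)) / (∫_Ω g(ξ)). -/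
theorem stmt_12 (d : ℕ) (hd : 1 ≤ d) (Ω : Set (Fin d → ℝ))
    (hne : Ω.Nonempty) (hopen : IsOpen Ω) (hconn : IsConnected Ω)
    (hbdd : Bornology.IsBounded Ω) (hvol : volume Ω < ⊤)
    (γ : ℝ) (hγ : γ > 0)
    (ξ₁ ξ₂ : (Fin d → ℝ) → ℝ)
    (hcont₁ : ContinuousOn ξ₁ (closure Ω)) (hcont₂ : ContinuousOn ξ₂ (closure Ω))
    (hbound₁ : ∀ x ∈ closure Ω, |ξ₁ x| ≤ 1) (hbound₂ : ∀ x ∈ closure Ω, |ξ₂ x| ≤ 1)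
    (hγ₁ : γ ≤ ∫ x in Ω, (1 - ξ₁ x ^ 2)) (hγ₂ : γ ≤ ∫ x in Ω, (1 - ξ₂ x ^ 2)) :
    ∀ x ∈ closure Ω,
      |((∫ y in Ω, (ξ₁ y - ξ₁ y ^ 3)) / ∫ y in Ω, (1 - ξ₁ y ^ 2)) * (1 - ξ₁ x ^ 2) -
        ((∫ y in Ω, (ξ₂ y - ξ₂ y ^ 3)) / ∫ y in Ω, (1 - ξ₂ y ^ 2)) * (1 - ξ₂ x ^ 2)| ≤
        (4 * (volume Ω).toReal / γ + 2 * (volume Ω).toReal ^ 2 / γ ^ 2) *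
          ⨆ y ∈ closure Ω, |ξ₁ y - ξ₂ y| :=
  stmt_12_general d Ω hopen hvol γ hγ ξ₁ ξ₂ hcont₁ hcont₂ hbound₁ hbound₂ hγ₁ hγ₂
end
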